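/- arXiv:2501.01383 — 2 statements merged into one kernel-verified Lean document; each statement's English description precedes it below -/
import Mathlib

section
/- Any finite nonnegative linear combination of split pseudometrics associated with circular splits (splits whose both parts are contiguous in a fixed circular order on {1,…,n}) satisfies the Kalmanson inequalities with respect to that circular order: for all i₁ < i₂ < i₃ < i₄, D(i₁,i₃) + D(i₂,i₄) ≥ max(D(i₂,i₃) + D(i₁,i₄), D(i₁,i₂) + D(i₃,i₄)). -/
open Finset

private lemma sub_val' {n : ℕ} [NeZero n] (i a : Fin n) :
    (i - a).val = if a.val ≤ i.val then i.val - a.val else i.val + n - a.val := by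
  rw [Fin.sub_def]
  have hi := i.isLt
  have ha := a.isLt
  show (n - a.val + i.val) % n = _
  split_ifs with h
  · have e : n - a.val + i.val = n + (i.val - a.val) := by omega
    rw [e, Nat.add_mod_left, Nat.mod_eq_of_lt (by omega)]
  · rw [Nat.mod_eq_of_lt (by omega)]
    omega

private lemma no_alt {n : ℕ} [NeZero n] (a b : Fin n) (i1 i2 i3 i4 : Fin n)
    (h12 : i1 < i2) (h23 : i2 < i3) (h34 : i3 < i4) :
    ¬ ((i1 - a ≤ b - a) ∧ ¬(i2 - a ≤ b - a) ∧ (i3 - a ≤ b - a) ∧ ¬(i4 - a ≤ b - a)) ∧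
    ¬ (¬(i1 - a ≤ b - a) ∧ (i2 - a ≤ b - a) ∧ ¬(i3 - a ≤ b - a) ∧ (i4 - a ≤ b - a)) := by
  have h1 := i1.isLt
  have h2 := i2.isLt
  have h3 := i3.isLt
  have h4 := i4.isLt
  have ha := a.isLt
  have hb := b.isLt
  simp only [Fin.le_def, Fin.lt_def, sub_val'] at *
  split_ifs at * <;> omega

/-- A finite nonnegative linear combination of split pseudometrics of circular
splits satisfies the Kalmanson inequalities with respect to the circular order. -/
theorem weighted_circular_split_kalmanson {n : ℕ} [NeZero n]
    (S : Finset (Finset (Fin n)))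
    (hS : ∀ A ∈ S, A.Nonempty ∧ A ≠ Finset.univ ∧
      ∃ a b : Fin n, A = univ.filter (fun k => k - a ≤ b - a))
    (α : Finset (Fin n) → ℝ) (hα : ∀ A ∈ S, 0 ≤ α A) :
    let D : Fin n → Fin n → ℝ := fun x y =>
      ∑ A ∈ S, α A * (if (x ∈ A) ↔ (y ∈ A) then 0 else 1)
    ∀ i₁ i₂ i₃ i₄ : Fin n, i₁ < i₂ → i₂ < i₃ → i₃ < i₄ →
      D i₁ i₃ + D i₂ i₄ ≥ max (D i₂ i₃ + D i₁ i₄) (D i₁ i₂ + D i₃ i₄) := by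
  intro D i₁ i₂ i₃ i₄ h12 h23 h34
  rw [ge_iff_le, max_le_iff]
  constructor <;>
  · simp only [D]
    rw [← Finset.sum_add_distrib, ← Finset.sum_add_distrib]
    apply Finset.sum_le_sum
    intro A hA
    obtain ⟨a, b, rfl⟩ := (hS A hA).2.2
    have hα' := hα _ hA
    rw [← mul_add, ← mul_add]
    apply mul_le_mul_of_nonneg_left _ hα'
    have hna := no_alt a b i₁ i₂ i₃ i₄ h12 h23 h34
    simp only [Finset.mem_filter, Finset.mem_univ, true_and]
    by_cases hm1 : i₁ - a ≤ b - a <;> by_cases hm2 : i₂ - a ≤ b - a <;>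
      by_cases hm3 : i₃ - a ≤ b - a <;> by_cases hm4 : i₄ - a ≤ b - a <;>
      simp [hm1, hm2, hm3, hm4] at hna ⊢
end

section
/- Let d be a symmetric real-valued function on {1,…,n} × {1,…,n} with d(i,i) = 0, where indices are taken modulo n. Define ω(i,j) = ½(d(i,j) + d(i+1,j+1) − d(i,j+1) − d(i+1,j)) for i < j (indices cyclic). Then for all k < l, d(k,l) = Σ ω(i,j), where the sum ranges over those pairs (i,j) whose associated circular split S_{ij} separates k from l (i.e., exactly one of k, l lies in the arc {i+1, i+2, …, j}). -/
open Finset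

/-!
Up to the factor `1/2`, `ω i j` is the mixed second difference of `d` at `(i, j)`. For `k < l`,
the arcs `{i+1, …, j}` with `i < j` that separate `k` from `l` are exactly those with
`i < k ≤ j < l` or `k ≤ i < l ≤ j`: two rectangles of index pairs. Summing mixed differences over
a rectangle telescopes to its four corners, so the total is
`(d 0 k - d 0 l - d k k + d k l) / 2 + (d k l - d k n - d l l + d l n) / 2`,
which is `d k l` because `d` vanishes on the diagonal and `d x n = d x 0 = d 0 x` cyclically.
-/

section MixedDiff

variable {M : Type*} [AddCommGroup M]

def mixedDiff (f : ℕ → ℕ → M) (a b : ℕ) : M :=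
  f a b - f a (b + 1) - f (a + 1) b + f (a + 1) (b + 1)

theorem sum_Ico_mixedDiff (f : ℕ → ℕ → M) (a : ℕ) {b₀ b₁ : ℕ} (hb : b₀ ≤ b₁) :
    ∑ b ∈ Ico b₀ b₁, mixedDiff f a b = f a b₀ - f (a + 1) b₀ - (f a b₁ - f (a + 1) b₁) := by
  have hdiff : ∀ b, mixedDiff f a b =
      -((f a (b + 1) - f (a + 1) (b + 1)) - (f a b - f (a + 1) b)) := fun b => by
    simp only [mixedDiff]; abel
  rw [sum_congr rfl fun b _ => hdiff b, sum_neg_distrib,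
    sum_Ico_sub (fun b => f a b - f (a + 1) b) hb]
  abel

theorem sum_Ico_Ico_mixedDiff (f : ℕ → ℕ → M) {a₀ a₁ b₀ b₁ : ℕ} (ha : a₀ ≤ a₁) (hb : b₀ ≤ b₁) :
    ∑ a ∈ Ico a₀ a₁, ∑ b ∈ Ico b₀ b₁, mixedDiff f a b =
      f a₀ b₀ - f a₀ b₁ - f a₁ b₀ + f a₁ b₁ := by
  have hdiff : ∀ a, ∑ b ∈ Ico b₀ b₁, mixedDiff f a b =
      -((f (a + 1) b₀ - f (a + 1) b₁) - (f a b₀ - f a b₁)) := fun a => by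
    rw [sum_Ico_mixedDiff f a hb]; abel
  rw [sum_congr rfl fun a _ => hdiff a, sum_neg_distrib,
    sum_Ico_sub (fun a => f a b₀ - f a b₁) ha]
  abel

end MixedDiff

theorem Fin.sum_univ_sum_univ_eq_sum_range_product {M : Type*} [AddCommMonoid M] {n : ℕ}
    (g : ℕ → ℕ → M) :
    ∑ i : Fin n, ∑ j : Fin n, g i j = ∑ p ∈ range n ×ˢ range n, g p.1 p.2 := by
  simp only [Fin.sum_univ_eq_sum_range (g _)]
  rw [Fin.sum_univ_eq_sum_range (fun a => ∑ b ∈ range n, g a b), sum_product]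

theorem Fin.sub_add_one_le_sub_add_one_iff {n : ℕ} [NeZero n] {i j : Fin n} (hij : i < j)
    (x : Fin n) : x - (i + 1) ≤ j - (i + 1) ↔ i < x ∧ x ≤ j := by
  have hi : (i + 1).val = i.val + 1 := Fin.val_add_one_of_lt' (by omega)
  have hji : i + 1 ≤ j := by rw [Fin.le_def, hi]; exact hij
  rw [Fin.le_def, Fin.coe_sub_iff_le.mpr hji, Fin.lt_def, Fin.le_def]
  by_cases hx : i + 1 ≤ x
  · rw [Fin.coe_sub_iff_le.mpr hx]
    rw [Fin.le_def] at hx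
    omega
  · rw [Fin.coe_sub_iff_lt.mpr (not_le.mp hx)]
    rw [Fin.le_def] at hx
    omega

theorem Fin.separates_iff {n : ℕ} [NeZero n] {k l : Fin n} (hkl : k < l) (i j : Fin n) :
    (i < j ∧ ¬((k - (i + 1) ≤ j - (i + 1)) ↔ (l - (i + 1) ≤ j - (i + 1)))) ↔
      (i < k ∧ k ≤ j ∧ j < l) ∨ (k ≤ i ∧ i < l ∧ l ≤ j) := by
  by_cases hij : i < j
  · simp only [hij, true_and, Fin.sub_add_one_le_sub_add_one_iff hij, Fin.lt_def, Fin.le_def]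
    rw [Fin.lt_def] at hkl hij
    omega
  · simp only [hij, false_and, false_iff, Fin.lt_def, Fin.le_def]
    rw [Fin.lt_def, not_lt] at hij
    omega

/-- Split decomposition identity: for any symmetric `d` vanishing on the
diagonal, `d k l` is the sum of the weights `ω i j` over the circular splits
`S_{ij}` (the arc `{i+1, …, j}` versus its complement) which separate `k`
from `l`.  Indices are cyclic (addition and subtraction in `Fin n`). -/
theorem split_decomposition {n : ℕ} [NeZero n]
    (d : Fin n → Fin n → ℝ)
    (hsym : ∀ i j, d i j = d j i) (hdiag : ∀ i, d i i = 0) :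
    let ω : Fin n → Fin n → ℝ := fun i j =>
      (d i j + d (i + 1) (j + 1) - d i (j + 1) - d (i + 1) j) / 2
    ∀ k l : Fin n, k < l →
      d k l = ∑ i, ∑ j ∈ univ.filter (fun j => i < j),
        (if ¬((k - (i + 1) ≤ j - (i + 1)) ↔ (l - (i + 1) ≤ j - (i + 1)))
          then ω i j else 0) := by
  intro ω k l hkl
  open Fin.NatCast in
  let D : ℕ → ℕ → ℝ := fun a b => d a b
  have hω : ∀ i j : Fin n, ω i j = mixedDiff D i j / 2 := fun i j => by
    simp only [ω, D, mixedDiff, Nat.cast_add, Nat.cast_one, Fin.cast_val_eq_self]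
    ring
  have hD : ∀ i : Fin n, D i i = 0 ∧ D i n = D 0 i := fun i => by
    simp only [D, Fin.cast_val_eq_self, Fin.natCast_self, Nat.cast_zero]
    exact ⟨hdiag i, hsym i 0⟩
  let P : ℕ → ℕ → Prop := fun a b =>
    (a < k ∧ (k : ℕ) ≤ b ∧ b < l) ∨ ((k : ℕ) ≤ a ∧ a < l ∧ (l : ℕ) ≤ b)
  have hrect : (range n ×ˢ range n).filter (fun p => P p.1 p.2) =
      Ico 0 (k : ℕ) ×ˢ Ico (k : ℕ) l ∪ Ico (k : ℕ) l ×ˢ Ico (l : ℕ) n := by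
    ext ⟨a, b⟩
    simp only [mem_filter, mem_product, mem_range, mem_union, mem_Ico, P]
    omega
  have hdisj : Disjoint (Ico 0 (k : ℕ) ×ˢ Ico (k : ℕ) l) (Ico (k : ℕ) l ×ˢ Ico (l : ℕ) n) := by
    rw [disjoint_left]
    rintro ⟨a, b⟩ h₁ h₂
    simp only [mem_product, mem_Ico] at h₁ h₂
    omega
  symm
  calc ∑ i, ∑ j ∈ univ.filter (fun j => i < j),
        (if ¬((k - (i + 1) ≤ j - (i + 1)) ↔ (l - (i + 1) ≤ j - (i + 1))) then ω i j else 0)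
      = (∑ i : Fin n, ∑ j : Fin n, if P i j then mixedDiff D i j else 0) / 2 := by
        simp only [sum_div, sum_filter, ← ite_and, Fin.separates_iff hkl, hω, ite_div, zero_div]
        simp only [Fin.lt_def, Fin.le_def, P]
    _ = (∑ p ∈ Ico 0 (k : ℕ) ×ˢ Ico (k : ℕ) l ∪ Ico (k : ℕ) l ×ˢ Ico (l : ℕ) n,
          mixedDiff D p.1 p.2) / 2 := by
        rw [Fin.sum_univ_sum_univ_eq_sum_range_product
          (fun a b => if P a b then mixedDiff D a b else 0), ← sum_filter, hrect]
    _ = d k l := by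
        rw [sum_union hdisj, sum_product, sum_product,
          sum_Ico_Ico_mixedDiff D (Nat.zero_le _) hkl.le, sum_Ico_Ico_mixedDiff D hkl.le l.isLt.le,
          (hD k).1, (hD l).1, (hD k).2, (hD l).2]
        simp only [D, Fin.cast_val_eq_self]
        ring
end
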